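/- Let Θ : ℝ² → ℝ be continuous and 2π-periodic in each variable, and let ω : [0,∞) → [0,∞) be nondecreasing with ω(ξ) > 0 for all ξ > 0. If |Θ(x) − Θ(y)| < ω(|x − y|) for all x ≠ y with x, y ∈ [−2π,2π]², then |Θ(x) − Θ(y)| < ω(|x − y|) for all x ≠ y in ℝ². -/

import Mathlib

/-! Translating by the lattice `2πℤ²` does not change `Θ`, and every pair `x, y` can be
translated, each point separately, to a pair `x', y'` in `[−2π,2π]²` with `|x' − y'| ≤ |x − y|`:
put `x'` in `[−π,π]²` and move `y' − x'` coordinatewise to the representative of `y − x` modulo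
`2π` of least absolute value. If `x' = y'` then `Θ x = Θ y` and positivity of `ω` concludes;
otherwise the hypothesis on the cube and monotonicity of `ω` do. -/

open Real

noncomputable section

abbrev Plane := EuclideanSpace ℝ (Fin 2)

/-- `2π`-periodicity in each variable. -/
def Periodic2 {α : Type*} (f : Plane → α) : Prop :=
  ∀ (x : Plane) (i : Fin 2), f (x + (2 * Real.pi) • EuclideanSpace.single i (1:ℝ)) = f x

/-- The compact region `[-2π, 2π]²`. -/
def bigCube : Set Plane := {x | ∀ i, x i ∈ Set.Icc (-(2 * Real.pi)) (2 * Real.pi)}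

lemma exists_abs_sub_int_mul_le {c : ℝ} (hc : 0 < c) (t : ℝ) :
    ∃ n : ℤ, |t - n * c| ≤ c / 2 ∧ |t - n * c| ≤ |t| := by
  refine ⟨round (t / c), ?_, ?_⟩ <;>
    rw [show t - round (t / c) * c = (t / c - round (t / c)) * c by field_simp,
      abs_mul, abs_of_pos hc]
  · linarith [mul_le_mul_of_nonneg_right (abs_sub_round (t / c)) hc.le]
  · calc |t / c - round (t / c)| * c ≤ |t / c - (0 : ℤ)| * c :=
          mul_le_mul_of_nonneg_right (round_le _ 0) hc.le
      _ = |t| := by rw [Int.cast_zero, sub_zero, abs_div, abs_of_pos hc, div_mul_cancel₀ _ hc.ne']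

lemma EuclideanSpace.norm_le_norm_of_abs_le {ι : Type*} [Fintype ι] {u v : EuclideanSpace ℝ ι}
    (h : ∀ i, |u i| ≤ |v i|) : ‖u‖ ≤ ‖v‖ := by
  simp only [EuclideanSpace.norm_eq, Real.norm_eq_abs]
  exact Real.sqrt_le_sqrt <| Finset.sum_le_sum fun i _ => pow_le_pow_left₀ (abs_nonneg _) (h i) 2

namespace Periodic2

variable {α : Type*} {f : Plane → α}

lemma apply_add_int_mul_smul_single (hf : Periodic2 f) (x : Plane) (i : Fin 2) (n : ℤ) :
    f (x + (n * (2 * π)) • EuclideanSpace.single i (1 : ℝ)) = f x := by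
  have hline : Function.Periodic (fun t : ℝ => f (x + t • EuclideanSpace.single i (1 : ℝ)))
      (2 * π) := fun t => by
    simpa only [add_smul, add_assoc] using hf (x + t • EuclideanSpace.single i (1 : ℝ)) i
  simpa using hline.int_mul_eq n

lemma apply_eq_of_sub_eq_int_mul (hf : Periodic2 f) {x y : Plane}
    (h : ∀ i, ∃ n : ℤ, x i - y i = n * (2 * π)) : f x = f y := by
  choose n hn using h
  have hx : x = y + (n 0 * (2 * π)) • EuclideanSpace.single 0 (1 : ℝ)
      + (n 1 * (2 * π)) • EuclideanSpace.single 1 (1 : ℝ) := by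
    ext i
    fin_cases i <;> simp [← hn]
  rw [hx, hf.apply_add_int_mul_smul_single, hf.apply_add_int_mul_smul_single]

end Periodic2

lemma exists_lattice_translates_mem_bigCube (x y : Plane) :
    ∃ x' ∈ bigCube, ∃ y' ∈ bigCube, (∀ i, ∃ n : ℤ, x i - x' i = n * (2 * π)) ∧
      (∀ i, ∃ n : ℤ, y i - y' i = n * (2 * π)) ∧ ‖x' - y'‖ ≤ ‖x - y‖ := by
  have hc : (0 : ℝ) < 2 * π := by positivity
  choose n hn_half using fun i => (exists_abs_sub_int_mul_le hc (x i)).imp fun _ => And.left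
  choose m hm_half hm_le using fun i => exists_abs_sub_int_mul_le hc (y i - x i)
  set x' : Plane := WithLp.toLp 2 fun i => x i - n i * (2 * π)
  set y' : Plane := WithLp.toLp 2 fun i => x' i + (y i - x i - m i * (2 * π))
  have hx' : ∀ i, |x' i| ≤ π := fun i => by simpa [x'] using hn_half i
  refine ⟨x', fun i => abs_le.mp ((hx' i).trans (by linarith)), y', fun i => ?_,
    fun i => ⟨n i, by simp [x']⟩, fun i => ⟨n i + m i, by simp only [Int.cast_add, y', x']; ring⟩, ?_⟩
  · have hy' : |y' i| ≤ 2 * π := calc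
      |y' i| ≤ |x' i| + |y i - x i - m i * (2 * π)| := by simpa [y'] using abs_add_le _ _
      _ ≤ π + π := add_le_add (hx' i) (by simpa using hm_half i)
      _ = 2 * π := by ring
    exact abs_le.mp hy'
  · refine EuclideanSpace.norm_le_norm_of_abs_le fun i => ?_
    calc |(x' - y') i| = |y i - x i - m i * (2 * π)| := by
          rw [← abs_neg]; congr 1; simp [y']
      _ ≤ |y i - x i| := hm_le i
      _ = |(x - y) i| := by simp [abs_sub_comm]

theorem strict_modulus_periodic_reduction (Θ : Plane → ℝ)
    (hΘp : Periodic2 Θ)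
    (ω : ℝ → ℝ) (hmono : MonotoneOn ω (Set.Ici 0))
    (hpos : ∀ ξ : ℝ, 0 < ξ → 0 < ω ξ)
    (H : ∀ x ∈ bigCube, ∀ y ∈ bigCube, x ≠ y → |Θ x - Θ y| < ω ‖x - y‖) :
    ∀ x y : Plane, x ≠ y → |Θ x - Θ y| < ω ‖x - y‖ := by
  intro x y hxy
  obtain ⟨x', hx', y', hy', hxx', hyy', hnorm⟩ := exists_lattice_translates_mem_bigCube x y
  rw [hΘp.apply_eq_of_sub_eq_int_mul hxx', hΘp.apply_eq_of_sub_eq_int_mul hyy']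
  by_cases h : x' = y'
  · rw [h, sub_self, abs_zero]
    exact hpos _ (norm_pos_iff.mpr (sub_ne_zero.mpr hxy))
  · exact (H x' hx' y' hy' h).trans_le (hmono (norm_nonneg _) (norm_nonneg _) hnorm)
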